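/- arXiv:1511.05908 — 2 statements merged into one kernel-verified Lean document; each statement's English description precedes it below -/
import Mathlib

section
/- Let 0 < ρ < 1, η > 0, ζ ∈ ℝ³ with ζ ≠ 0, and fix ν ∈ (0,1). For x in the cone Ξ₊(ν) = {x : ⟨x,ζ⟩ ≥ ν|x||ζ|}, the function Φ(x) = η ∫₀^∞ (⟨x + tζ⟩^{-ρ} − ⟨tζ⟩^{-ρ}) dt is well defined, i.e. the improper integral converges absolutely. -/
/-!
Since `⟨x, ζ⟩ ≥ 0`, we have `‖tζ‖² ≤ ‖x + tζ‖² ≤ ‖tζ‖² + t (‖x‖² + 2‖x‖‖ζ‖)` for `t ≥ 1`, and the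
tangent-line bound for the convex function `u ↦ u ^ (-s)` turns this into
`|(1 + ‖x + tζ‖²) ^ (-s) - (1 + ‖tζ‖²) ^ (-s)| = O(t · t ^ (-2s - 2)) = O(t ^ (-1 - 2s))`,
which is integrable at infinity as soon as `s > 0`. The integrand is continuous, so it is
integrable on `[0, ∞)`.
-/

open MeasureTheory Filter Asymptotics Set
open scoped RealInnerProductSpace

namespace Real

theorem rpow_neg_sub_rpow_neg_le {y z s : ℝ} (hy : 0 < y) (hyz : y ≤ z) (hs : 0 ≤ s) :
    y ^ (-s) - z ^ (-s) ≤ s * (z - y) * y ^ (-(s + 1)) := by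
  have hz : 0 < z := hy.trans_le hyz
  have hw : 0 < z / y := div_pos hz hy
  have key : 1 - (z / y) ^ (-s) ≤ s * (z / y - 1) :=
    calc 1 - (z / y) ^ (-s) = 1 - ((z / y) ^ s)⁻¹ := by rw [rpow_neg hw.le]
      _ ≤ log ((z / y) ^ s) := one_sub_inv_le_log_of_pos (rpow_pos_of_pos hw s)
      _ = s * log (z / y) := log_rpow hw s
      _ ≤ s * (z / y - 1) := mul_le_mul_of_nonneg_left (log_le_sub_one_of_pos hw) hs
  have hys : 0 < y ^ (-s) := rpow_pos_of_pos hy _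
  calc y ^ (-s) - z ^ (-s) = y ^ (-s) * (1 - (z / y) ^ (-s)) := by
        rw [div_rpow hz.le hy.le]; field_simp
    _ ≤ y ^ (-s) * (s * (z / y - 1)) := mul_le_mul_of_nonneg_left key hys.le
    _ = s * (z - y) * y ^ (-(s + 1)) := by
        rw [neg_add', rpow_sub_one hy.ne']; field_simp

end Real

theorem Continuous.one_add_norm_sq_rpow {α E : Type*} [TopologicalSpace α] [SeminormedAddGroup E]
    {f : α → E} (hf : Continuous f) (p : ℝ) : Continuous fun a => (1 + ‖f a‖ ^ 2) ^ p :=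
  (continuous_const.add (hf.norm.pow 2)).rpow_const fun a =>
    Or.inl (by positivity : (1 + ‖f a‖ ^ 2 : ℝ) ≠ 0)

section

variable {E : Type*} [NormedAddCommGroup E] [InnerProductSpace ℝ E] {x ζ : E} {s : ℝ}

theorem abs_one_add_norm_add_smul_sq_rpow_sub_le (hζ : ζ ≠ 0) (hxζ : 0 ≤ ⟪x, ζ⟫) (hs : 0 ≤ s)
    {t : ℝ} (ht : 1 ≤ t) :
    |(1 + ‖x + t • ζ‖ ^ 2) ^ (-s) - (1 + ‖t • ζ‖ ^ 2) ^ (-s)| ≤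
      s * (‖x‖ ^ 2 + 2 * ‖x‖ * ‖ζ‖) * ‖ζ‖ ^ (-(2 * s + 2)) * t ^ (-(1 + 2 * s)) := by
  have ht0 : 0 < t := one_pos.trans_le ht
  have htζ : ‖t • ζ‖ = t * ‖ζ‖ := by rw [norm_smul, Real.norm_of_nonneg ht0.le]
  have htζ_pos : 0 < t * ‖ζ‖ := mul_pos ht0 (norm_pos_iff.mpr hζ)
  set gap := ‖x‖ ^ 2 + 2 * t * ⟪x, ζ⟫
  have hsplit : 1 + ‖x + t • ζ‖ ^ 2 = (1 + ‖t • ζ‖ ^ 2) + gap := by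
    rw [norm_add_sq_real, real_inner_smul_right]; ring
  have hgap_nonneg : 0 ≤ gap := by positivity
  have hgap_le : gap ≤ t * (‖x‖ ^ 2 + 2 * ‖x‖ * ‖ζ‖) := by
    nlinarith [real_inner_le_norm x ζ, sq_nonneg ‖x‖]
  have hle : 1 + ‖t • ζ‖ ^ 2 ≤ 1 + ‖x + t • ζ‖ ^ 2 := by linarith
  have hpow : (1 + ‖t • ζ‖ ^ 2) ^ (-(s + 1)) ≤ (t * ‖ζ‖) ^ (-(2 * s + 2)) :=
    calc (1 + ‖t • ζ‖ ^ 2) ^ (-(s + 1)) ≤ ((t * ‖ζ‖) ^ 2) ^ (-(s + 1)) :=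
          Real.rpow_le_rpow_of_nonpos (by positivity) (by rw [htζ]; linarith) (by linarith)
      _ = (t * ‖ζ‖) ^ (-(2 * s + 2)) := by
          rw [← Real.rpow_natCast_mul htζ_pos.le]; push_cast; ring_nf
  rw [abs_sub_comm, abs_of_nonneg (sub_nonneg.mpr
    (Real.rpow_le_rpow_of_nonpos (by positivity) hle (by linarith)))]
  calc _ ≤ s * gap * (1 + ‖t • ζ‖ ^ 2) ^ (-(s + 1)) := by
        simpa [hsplit] using Real.rpow_neg_sub_rpow_neg_le (by positivity) hle hs
    _ ≤ s * (t * (‖x‖ ^ 2 + 2 * ‖x‖ * ‖ζ‖)) * (t * ‖ζ‖) ^ (-(2 * s + 2)) := by gcongr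
    _ = _ := by
        rw [Real.mul_rpow ht0.le (norm_nonneg _), show -(1 + 2 * s) = 1 + -(2 * s + 2) by ring,
          Real.rpow_add ht0, Real.rpow_one]
        ring

theorem isBigO_one_add_norm_add_smul_sq_rpow_sub (hζ : ζ ≠ 0) (hxζ : 0 ≤ ⟪x, ζ⟫) (hs : 0 ≤ s) :
    (fun t : ℝ => (1 + ‖x + t • ζ‖ ^ 2) ^ (-s) - (1 + ‖t • ζ‖ ^ 2) ^ (-s)) =O[atTop]
      fun t => t ^ (-(1 + 2 * s)) := by
  refine IsBigO.of_bound (s * (‖x‖ ^ 2 + 2 * ‖x‖ * ‖ζ‖) * ‖ζ‖ ^ (-(2 * s + 2)))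
    ((eventually_ge_atTop 1).mono fun t ht => ?_)
  rw [Real.norm_eq_abs, Real.norm_of_nonneg (Real.rpow_nonneg (zero_le_one.trans ht) _)]
  exact abs_one_add_norm_add_smul_sq_rpow_sub_le hζ hxζ hs ht

theorem integrableOn_Ici_one_add_norm_add_smul_sq_rpow_sub (hζ : ζ ≠ 0) (hxζ : 0 ≤ ⟪x, ζ⟫)
    (hs : 0 < s) :
    IntegrableOn (fun t : ℝ => (1 + ‖x + t • ζ‖ ^ 2) ^ (-s) - (1 + ‖t • ζ‖ ^ 2) ^ (-s))
      (Ici 0) := by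
  have hcont : Continuous fun t : ℝ => (1 + ‖x + t • ζ‖ ^ 2) ^ (-s) - (1 + ‖t • ζ‖ ^ 2) ^ (-s) :=
    ((continuous_const.add (continuous_id.smul continuous_const)).one_add_norm_sq_rpow _).sub
      ((continuous_id.smul continuous_const).one_add_norm_sq_rpow _)
  exact (hcont.locallyIntegrable.locallyIntegrableOn _).integrableOn_of_isBigO_atTop
    (isBigO_one_add_norm_add_smul_sq_rpow_sub hζ hxζ hs.le)
    ⟨Ioi 1, Ioi_mem_atTop 1, integrableOn_Ioi_rpow_of_lt (by linarith) one_pos⟩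

end

theorem phase_integral_converges_general (ρ η ν : ℝ) (hρ0 : 0 < ρ) (hν0 : 0 < ν)
    (ζ x : EuclideanSpace ℝ (Fin 3)) (hζ : ζ ≠ 0)
    (hx : ν * (‖x‖ * ‖ζ‖) ≤ (inner ℝ x ζ : ℝ)) :
    IntegrableOn
      (fun t : ℝ => η * ((1 + ‖x + t • ζ‖ ^ 2) ^ (-(ρ / 2)) - (1 + ‖t • ζ‖ ^ 2) ^ (-(ρ / 2))))
      (Set.Ici (0 : ℝ)) := by
  have hxζ : 0 ≤ ⟪x, ζ⟫ := le_trans (by positivity) hx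
  exact (integrableOn_Ici_one_add_norm_add_smul_sq_rpow_sub hζ hxζ (half_pos hρ0)).const_mul η

/-- For `0 < ρ < 1`, `η > 0`, `ζ ≠ 0`, `ν ∈ (0,1)`, and `x` in the cone
`Ξ₊(ν) = {x : ⟨x,ζ⟩ ≥ ν|x||ζ|}`, the improper integral defining
`Φ(x) = η ∫₀^∞ (⟨x + tζ⟩^{-ρ} − ⟨tζ⟩^{-ρ}) dt` converges absolutely. -/
theorem phase_integral_converges (ρ η ν : ℝ) (hρ0 : 0 < ρ) (hρ1 : ρ < 1) (hη : 0 < η)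
    (hν0 : 0 < ν) (hν1 : ν < 1) (ζ x : EuclideanSpace ℝ (Fin 3)) (hζ : ζ ≠ 0)
    (hx : ν * (‖x‖ * ‖ζ‖) ≤ (inner ℝ x ζ : ℝ)) :
    IntegrableOn
      (fun t : ℝ => η * ((1 + ‖x + t • ζ‖ ^ 2) ^ (-(ρ / 2)) - (1 + ‖t • ζ‖ ^ 2) ^ (-(ρ / 2))))
      (Set.Ici (0 : ℝ)) :=
  phase_integral_converges_general ρ η ν hρ0 hν0 ζ x hζ hx
end

section
/- Let 0 < ρ < 1, η > 0, ζ ∈ ℝ³ with |ζ| bounded between two positive constants, and ν ∈ (0,1). For x in the cone Ξ₊(ν) = {x : ⟨x,ζ⟩ ≥ ν|x||ζ|}, the function Φ(x) = η ∫₀^∞ (⟨x + tζ⟩^{-ρ} − ⟨tζ⟩^{-ρ}) dt satisfies |Φ(x)| ≤ C (1 + |x|)^{1-ρ} for a constant C depending only on ρ, η, ν, and the bounds on |ζ|. -/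
/-!
Put `u = 1 + ‖tζ‖²` and `v = 1 + ‖x + tζ‖²`. On the cone, `⟪x, ζ⟫ ≥ 0`, so `u ≤ v` and both
exceed `(c₁t)²`; hence the integrand is at most `(c₁t)^(-ρ)`, which is integrable at `0`.
Once `c₁t ≥ ‖x‖`, the mean value theorem for `s ↦ s^(-ρ/2)` and `v - u ≤ 3‖x‖‖tζ‖` bound it by
a multiple of `‖x‖(c₁t)^(-ρ-1)`. Splitting the integral at `c₁t = 1 + ‖x‖`, both pieces are
`O((1 + ‖x‖)^(1-ρ))`.
-/

open MeasureTheory Set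
open scoped RealInnerProductSpace

lemma rpow_neg_sub_rpow_neg_le {p q e : ℝ} (hp : 0 < p) (hpq : p ≤ q) (he : 0 ≤ e) :
    p ^ (-e) - q ^ (-e) ≤ e * p ^ (-e - 1) * (q - p) := by
  have hpos : ∀ x ∈ Ici p, x ≠ 0 := fun x hx => (hp.trans_le hx).ne'
  have hderiv : ∀ x ∈ interior (Ici p), -(e * p ^ (-e - 1)) ≤ deriv (fun x : ℝ => x ^ (-e)) x := by
    intro x hx
    rw [interior_Ici, mem_Ioi] at hx
    rw [Real.deriv_rpow_const, neg_mul, neg_le_neg_iff]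
    exact mul_le_mul_of_nonneg_left (Real.rpow_le_rpow_of_nonpos hp hx.le (by linarith)) he
  have := (convex_Ici p).mul_sub_le_image_sub_of_le_deriv
    (fun x hx => (Real.continuousAt_rpow_const x _ (Or.inl (hpos x hx))).continuousWithinAt)
    (fun x hx => (Real.differentiableAt_rpow_const_of_ne _
      (hpos x (interior_subset hx))).differentiableWithinAt)
    hderiv p self_mem_Ici q hpq hpq
  linarith

lemma one_add_sq_rpow_le {r s a : ℝ} (hr : 0 < r) (hrs : r ≤ s) (ha : a ≤ 0) :
    (1 + s ^ 2) ^ a ≤ r ^ (2 * a) := by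
  rw [Real.rpow_mul hr.le]
  exact_mod_cast Real.rpow_le_rpow_of_nonpos (by positivity) (by nlinarith) ha

lemma norm_le_norm_add_of_inner_nonneg {F : Type*} [NormedAddCommGroup F] [InnerProductSpace ℝ F]
    {x y : F} (h : 0 ≤ ⟪x, y⟫) : ‖y‖ ≤ ‖x + y‖ := by
  have := norm_add_sq_real x y
  nlinarith [norm_nonneg y, norm_nonneg (x + y), sq_nonneg ‖x‖]

lemma abs_integral_Ioi_le_of_rpow_bounds {g : ℝ → ℝ} {ρ A B S : ℝ} (hρ0 : 0 < ρ) (hρ1 : ρ < 1)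
    (hS : 0 < S) (hg : AEStronglyMeasurable g)
    (h₀ : ∀ t ∈ Ioc 0 S, |g t| ≤ A * t ^ (-ρ)) (h₁ : ∀ t ∈ Ioi S, |g t| ≤ B * t ^ (-ρ - 1)) :
    |∫ t in Ioi 0, g t| ≤ A * (S ^ (1 - ρ) / (1 - ρ)) + B * (S ^ (-ρ) / ρ) := by
  have i₀ : IntegrableOn (fun t => A * t ^ (-ρ)) (Ioc 0 S) :=
    ((intervalIntegrable_iff_integrableOn_Ioc_of_le hS.le).mp
      (intervalIntegral.intervalIntegrable_rpow' (by linarith))).const_mul A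
  have i₁ : IntegrableOn (fun t => B * t ^ (-ρ - 1)) (Ioi S) :=
    (integrableOn_Ioi_rpow_of_lt (by linarith) hS).const_mul B
  have b₀ : ∀ᵐ t ∂volume.restrict (Ioc 0 S), ‖g t‖ ≤ A * t ^ (-ρ) :=
    (ae_restrict_iff' measurableSet_Ioc).mpr (.of_forall h₀)
  have b₁ : ∀ᵐ t ∂volume.restrict (Ioi S), ‖g t‖ ≤ B * t ^ (-ρ - 1) :=
    (ae_restrict_iff' measurableSet_Ioi).mpr (.of_forall h₁)
  have v₀ : ∫ t in Ioc 0 S, t ^ (-ρ) = S ^ (1 - ρ) / (1 - ρ) := by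
    rw [← intervalIntegral.integral_of_le hS.le, integral_rpow (.inl (by linarith)),
      Real.zero_rpow (by linarith), neg_add_eq_sub, sub_zero]
  have v₁ : ∫ t in Ioi S, t ^ (-ρ - 1) = S ^ (-ρ) / ρ := by
    rw [integral_Ioi_rpow_of_lt (by linarith) hS, sub_add_cancel, neg_div_neg_eq]
  rw [← Ioc_union_Ioi_eq_Ioi hS.le, setIntegral_union (Ioc_disjoint_Ioi le_rfl) measurableSet_Ioi
    (i₀.mono' hg.restrict b₀) (i₁.mono' hg.restrict b₁)]
  calc |(∫ t in Ioc 0 S, g t) + ∫ t in Ioi S, g t|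
      ≤ |∫ t in Ioc 0 S, g t| + |∫ t in Ioi S, g t| := abs_add_le _ _
    _ ≤ (∫ t in Ioc 0 S, A * t ^ (-ρ)) + ∫ t in Ioi S, B * t ^ (-ρ - 1) :=
      add_le_add (norm_integral_le_of_norm_le i₀ b₀) (norm_integral_le_of_norm_le i₁ b₁)
    _ = A * (S ^ (1 - ρ) / (1 - ρ)) + B * (S ^ (-ρ) / ρ) := by
      rw [integral_const_mul, integral_const_mul, v₀, v₁]

section Phase

variable {F : Type*} [NormedAddCommGroup F] [InnerProductSpace ℝ F]

noncomputable def phaseIntegrand (ρ : ℝ) (x ζ : F) (t : ℝ) : ℝ :=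
  (1 + ‖x + t • ζ‖ ^ 2) ^ (-(ρ / 2)) - (1 + ‖t • ζ‖ ^ 2) ^ (-(ρ / 2))

lemma continuous_phaseIntegrand (ρ : ℝ) (x ζ : F) : Continuous (phaseIntegrand ρ x ζ) := by
  have h : ∀ v : ℝ → F, Continuous v → Continuous fun t => (1 + ‖v t‖ ^ 2) ^ (-(ρ / 2)) :=
    fun v hv => (continuous_const.add (hv.norm.pow 2)).rpow_const
      fun t => .inl (by positivity : (0 : ℝ) < 1 + ‖v t‖ ^ 2).ne'
  exact (h _ (by fun_prop)).sub (h _ (by fun_prop))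

variable {ρ c t : ℝ} {x ζ : F}

lemma mul_le_norm_smul (hcζ : c ≤ ‖ζ‖) (ht : 0 ≤ t) : c * t ≤ ‖t • ζ‖ := by
  rw [norm_smul, Real.norm_of_nonneg ht, mul_comm]; gcongr

lemma abs_phaseIntegrand_le (hρ : 0 ≤ ρ) (hxζ : 0 ≤ ⟪x, ζ⟫) (hc : 0 < c) (hcζ : c ≤ ‖ζ‖)
    (ht : 0 < t) : |phaseIntegrand ρ x ζ t| ≤ (c * t) ^ (-ρ) := by
  have hct := mul_le_norm_smul hcζ ht.le
  have hlo := norm_le_norm_add_of_inner_nonneg (x := x) (y := t • ζ)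
    (by rw [inner_smul_right]; positivity)
  have key : ∀ v : F, c * t ≤ ‖v‖ → (1 + ‖v‖ ^ 2) ^ (-(ρ / 2)) ≤ (c * t) ^ (-ρ) := by
    intro v hv
    convert one_add_sq_rpow_le (by positivity) hv (by linarith : -(ρ / 2) ≤ 0) using 2
    ring
  exact abs_sub_le_of_nonneg_of_le (by positivity) (key _ (hct.trans hlo)) (by positivity)
    (key _ hct)

lemma abs_phaseIntegrand_le_of_norm_le (hρ : 0 ≤ ρ) (hxζ : 0 ≤ ⟪x, ζ⟫) (hc : 0 < c)
    (hcζ : c ≤ ‖ζ‖) (ht : 0 < t) (hxt : ‖x‖ ≤ c * t) :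
    |phaseIntegrand ρ x ζ t| ≤ 3 * ρ / 2 * (‖ζ‖ / c) * ‖x‖ * (c * t) ^ (-ρ - 1) := by
  have hct := mul_le_norm_smul hcζ ht.le
  have hlo := norm_le_norm_add_of_inner_nonneg (x := x) (y := t • ζ)
    (by rw [inner_smul_right]; positivity)
  have hsq : ‖t • ζ‖ ^ 2 ≤ ‖x + t • ζ‖ ^ 2 := pow_le_pow_left₀ (norm_nonneg _) hlo 2
  have hgap : ‖x + t • ζ‖ ^ 2 - ‖t • ζ‖ ^ 2 ≤ 3 * ‖x‖ * ‖t • ζ‖ := by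
    nlinarith [norm_add_le x (t • ζ), norm_nonneg x, norm_nonneg (x + t • ζ)]
  have hdecay : (1 + ‖t • ζ‖ ^ 2) ^ (-(ρ / 2) - 1) ≤ (c * t) ^ (-ρ - 2) := by
    convert one_add_sq_rpow_le (by positivity) hct (by linarith : -(ρ / 2) - 1 ≤ 0) using 2
    ring
  have hmvt := rpow_neg_sub_rpow_neg_le (by positivity : 0 < 1 + ‖t • ζ‖ ^ 2)
    (by linarith : 1 + ‖t • ζ‖ ^ 2 ≤ 1 + ‖x + t • ζ‖ ^ 2) (by positivity : 0 ≤ ρ / 2)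
  have hmono : (1 + ‖x + t • ζ‖ ^ 2) ^ (-(ρ / 2)) ≤ (1 + ‖t • ζ‖ ^ 2) ^ (-(ρ / 2)) :=
    Real.rpow_le_rpow_of_nonpos (by positivity) (by linarith) (by linarith)
  have hsmul : ‖t • ζ‖ = t * ‖ζ‖ := by rw [norm_smul, Real.norm_of_nonneg ht.le]
  have hshift : (c * t) ^ (-ρ - 1) = (c * t) ^ (-ρ - 2) * (c * t) := by
    rw [← Real.rpow_add_one (by positivity)]; ring_nf
  rw [phaseIntegrand, abs_sub_comm, abs_of_nonneg (by linarith), hshift]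
  calc _ ≤ ρ / 2 * (1 + ‖t • ζ‖ ^ 2) ^ (-(ρ / 2) - 1) * (‖x + t • ζ‖ ^ 2 - ‖t • ζ‖ ^ 2) := by
        linarith
    _ ≤ ρ / 2 * (c * t) ^ (-ρ - 2) * (3 * ‖x‖ * ‖t • ζ‖) := by
        gcongr
    _ = _ := by rw [hsmul]; field_simp

lemma abs_integral_phaseIntegrand_le (hρ0 : 0 < ρ) (hρ1 : ρ < 1) (hxζ : 0 ≤ ⟪x, ζ⟫)
    (hc : 0 < c) (hcζ : c ≤ ‖ζ‖) :
    |∫ t in Ioi 0, phaseIntegrand ρ x ζ t|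
      ≤ (1 / (1 - ρ) + 3 * ‖ζ‖ / (2 * c)) / c * (1 + ‖x‖) ^ (1 - ρ) := by
  set S := 1 + ‖x‖
  have hS : 0 < S := by positivity
  have hrescale : ∫ t in Ioi 0, phaseIntegrand ρ x ζ t
      = c⁻¹ * ∫ s in Ioi 0, phaseIntegrand ρ x ζ (s / c) := by
    simpa [mul_div_cancel_left₀ _ hc.ne'] using
      integral_comp_mul_left_Ioi (fun s => phaseIntegrand ρ x ζ (s / c)) 0 hc
  have hsplit := abs_integral_Ioi_le_of_rpow_bounds
    (g := fun s => phaseIntegrand ρ x ζ (s / c)) (A := 1) (B := 3 * ρ / 2 * (‖ζ‖ / c) * ‖x‖)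
    hρ0 hρ1 hS
    ((continuous_phaseIntegrand ρ x ζ).comp (continuous_id.div_const c)).aestronglyMeasurable
    (fun s hs => by
      simpa [mul_div_cancel₀ _ hc.ne'] using
        abs_phaseIntegrand_le hρ0.le hxζ hc hcζ (div_pos hs.1 hc))
    (fun s hs => by
      have hs : S < s := hs
      simpa [mul_div_cancel₀ _ hc.ne'] using
        abs_phaseIntegrand_le_of_norm_le hρ0.le hxζ hc hcζ (div_pos (hS.trans hs) hc)
          (by rw [mul_div_cancel₀ _ hc.ne']; linarith))
  have hlin : ‖x‖ * S ^ (-ρ) ≤ S ^ (1 - ρ) := by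
    rw [sub_eq_neg_add, Real.rpow_add_one hS.ne', mul_comm]
    gcongr
    linarith
  rw [hrescale, abs_mul, abs_inv, abs_of_pos hc]
  calc c⁻¹ * |∫ s in Ioi 0, phaseIntegrand ρ x ζ (s / c)|
      ≤ c⁻¹ * (1 * (S ^ (1 - ρ) / (1 - ρ)) + 3 * ρ / 2 * (‖ζ‖ / c) * ‖x‖ * (S ^ (-ρ) / ρ)) := by
        gcongr
    _ = c⁻¹ * (S ^ (1 - ρ) / (1 - ρ) + 3 * ‖ζ‖ / (2 * c) * (‖x‖ * S ^ (-ρ))) := by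
        field_simp
    _ ≤ c⁻¹ * (S ^ (1 - ρ) / (1 - ρ) + 3 * ‖ζ‖ / (2 * c) * S ^ (1 - ρ)) := by gcongr
    _ = _ := by ring

end Phase

theorem phase_bound_general (ρ η ν c₁ c₂ : ℝ) (hρ0 : 0 < ρ) (hρ1 : ρ < 1) (hη : 0 < η)
    (hν0 : 0 < ν) (hc₁ : 0 < c₁) (hc₁₂ : c₁ ≤ c₂) :
    ∃ C > 0, ∀ ζ x : EuclideanSpace ℝ (Fin 3), c₁ ≤ ‖ζ‖ → ‖ζ‖ ≤ c₂ →
      ν * (‖x‖ * ‖ζ‖) ≤ (inner ℝ x ζ : ℝ) →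
      |η * ∫ t in Set.Ici (0 : ℝ),
          ((1 + ‖x + t • ζ‖ ^ 2) ^ (-(ρ / 2)) - (1 + ‖t • ζ‖ ^ 2) ^ (-(ρ / 2)))|
        ≤ C * (1 + ‖x‖) ^ (1 - ρ) := by
  have hρ : 0 < 1 - ρ := by linarith
  have hc₂ : 0 < c₂ := hc₁.trans_le hc₁₂
  refine ⟨η * ((1 / (1 - ρ) + 3 * c₂ / (2 * c₁)) / c₁), by positivity, ?_⟩
  intro ζ x hζ₁ hζ₂ hcone
  have hxζ : 0 ≤ ⟪x, ζ⟫ := le_trans (by positivity) hcone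
  rw [integral_Ici_eq_integral_Ioi, abs_mul, abs_of_pos hη, mul_assoc]
  gcongr
  calc _ ≤ (1 / (1 - ρ) + 3 * ‖ζ‖ / (2 * c₁)) / c₁ * (1 + ‖x‖) ^ (1 - ρ) :=
        abs_integral_phaseIntegrand_le hρ0 hρ1 hxζ hc₁ hζ₁
    _ ≤ _ := by gcongr

/-- For `0 < ρ < 1`, `η > 0`, `ν ∈ (0,1)`, `0 < c₁ ≤ |ζ| ≤ c₂`, and `x` in the cone
`Ξ₊(ν) = {x : ⟨x,ζ⟩ ≥ ν|x||ζ|}`, the phase function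
`Φ(x) = η ∫₀^∞ (⟨x + tζ⟩^{-ρ} − ⟨tζ⟩^{-ρ}) dt` satisfies
`|Φ(x)| ≤ C (1 + |x|)^{1-ρ}` with `C` depending only on `ρ, η, ν, c₁, c₂`. -/
theorem phase_bound (ρ η ν c₁ c₂ : ℝ) (hρ0 : 0 < ρ) (hρ1 : ρ < 1) (hη : 0 < η)
    (hν0 : 0 < ν) (hν1 : ν < 1) (hc₁ : 0 < c₁) (hc₁₂ : c₁ ≤ c₂) :
    ∃ C > 0, ∀ ζ x : EuclideanSpace ℝ (Fin 3), c₁ ≤ ‖ζ‖ → ‖ζ‖ ≤ c₂ →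
      ν * (‖x‖ * ‖ζ‖) ≤ (inner ℝ x ζ : ℝ) →
      |η * ∫ t in Set.Ici (0 : ℝ),
          ((1 + ‖x + t • ζ‖ ^ 2) ^ (-(ρ / 2)) - (1 + ‖t • ζ‖ ^ 2) ^ (-(ρ / 2)))|
        ≤ C * (1 + ‖x‖) ^ (1 - ρ) :=
  phase_bound_general ρ η ν c₁ c₂ hρ0 hρ1 hη hν0 hc₁ hc₁₂
end
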